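/- There exists an ancestral ADMG G and an admissible partition C of its vertex set such that the induced cluster graph G_C contains an almost directed cycle (hence G_C is not ancestral). Concretely, let V = {X_1, X_2, X_3, X_4, X_5}, let G have the directed edges X_1 → X_3 and X_3 → X_4 and the single bidirected edge X_2 ↔ X_5, and let C_1 = {X_1, X_2}, C_2 = {X_3}, C_3 = {X_4, X_5}. Then G is ancestral, the partition {C_1, C_2, C_3} is admissible, and the induced cluster graph G_C contains the bidirected edge C_1 ↔ C_3 with C_1 an ancestor of C_3 in G_C. -/
import Mathlib


/-- A directed mixed graph over a vertex type `V`: a set of directed edges and a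
symmetric set of bidirected edges between distinct vertices. -/
structure DMG (V : Type) where
  dir : V → V → Prop
  bidir : V → V → Prop
  bidir_symm : ∀ x y, bidir x y → bidir y x
  dir_ne : ∀ x y, dir x y → x ≠ y
  bidir_ne : ∀ x y, bidir x y → x ≠ y

namespace DMG

variable {V : Type} {I : Type}

/-- `X` is an ancestor of `Y`: there is a directed path of length ≥ 1 from `X` to `Y`. -/
def Anc (G : DMG V) : V → V → Prop := Relation.TransGen G.dir

/-- No directed cycles. -/
def Acyclic (G : DMG V) : Prop := ∀ x, ¬ G.Anc x x

/-- No bidirected edges. -/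
def NoBidir (G : DMG V) : Prop := ∀ x y, ¬ G.bidir x y

/-- A DAG: no bidirected edges and no directed cycles. -/
def IsDAG (G : DMG V) : Prop := G.Acyclic ∧ G.NoBidir

/-- Two vertices are adjacent if joined by a directed or bidirected edge. -/
def Adj (G : DMG V) (x y : V) : Prop := G.dir x y ∨ G.dir y x ∨ G.bidir x y

/-- Ancestral graph: no directed cycle, no almost directed cycle. -/
def Ancestral (G : DMG V) : Prop :=
  G.Acyclic ∧ ∀ x y, G.bidir x y → ¬ G.Anc x y

/-- The cluster graph induced by `G` on the partition of `V` into the fibers of `π`. -/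
def clusterGraph (G : DMG V) (π : V → I) : DMG I where
  dir i j := i ≠ j ∧ ∃ x y, π x = i ∧ π y = j ∧ G.dir x y
  bidir i j := i ≠ j ∧ ∃ x y, π x = i ∧ π y = j ∧ G.bidir x y
  bidir_symm := by
    rintro i j ⟨hne, x, y, hx, hy, hb⟩
    exact ⟨hne.symm, y, x, hy, hx, G.bidir_symm _ _ hb⟩
  dir_ne := fun _ _ h => h.1
  bidir_ne := fun _ _ h => h.1

/-- `G` is compatible with the cluster graph `GC` (over the partition given by the
fibers of `π`) if the cluster graph induced by `G` equals `GC`. -/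
def CompatibleWith (G : DMG V) (π : V → I) (GC : DMG I) : Prop :=
  (∀ i j, GC.dir i j ↔ (G.clusterGraph π).dir i j) ∧
  (∀ i j, GC.bidir i j ↔ (G.clusterGraph π).bidir i j)

/-- Walks in a directed mixed graph: each consecutive pair of vertices is joined
by a directed edge (in either direction) or a bidirected edge, and we remember
which edge is used. -/
inductive Walk (G : DMG V) : V → V → Type
  | nil (x : V) : Walk G x x
  | fwd {x y z : V} (h : G.dir x y) (w : Walk G y z) : Walk G x z
  | bwd {x y z : V} (h : G.dir y x) (w : Walk G y z) : Walk G x z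
  | bi  {x y z : V} (h : G.bidir x y) (w : Walk G y z) : Walk G x z

namespace Walk

variable {G : DMG V}

/-- The list of vertices visited by a walk. -/
def support : {x y : V} → Walk G x y → List V
  | _, _, .nil x => [x]
  | _, _, .fwd (x := x) _ w => x :: w.support
  | _, _, .bwd (x := x) _ w => x :: w.support
  | _, _, .bi (x := x) _ w => x :: w.support

/-- Whether a walk is trivial. -/
def isNil : {x y : V} → Walk G x y → Bool
  | _, _, .nil _ => true
  | _, _, .fwd _ _ => false
  | _, _, .bwd _ _ => false
  | _, _, .bi _ _ => false

/-- Whether the first edge of the walk has an arrowhead at the first vertex. -/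
def headAtStart : {x y : V} → Walk G x y → Bool
  | _, _, .nil _ => false
  | _, _, .fwd _ _ => false
  | _, _, .bwd _ _ => true
  | _, _, .bi _ _ => true

/-- The internal (non-endpoint) vertices of a walk, each paired with a Boolean
recording whether it is a collider on the walk (both incident edges of the walk
have an arrowhead at it). -/
def marked : {x y : V} → Walk G x y → List (V × Bool)
  | _, _, .nil _ => []
  | _, _, .fwd (y := y) _ w => (if w.isNil then [] else [(y, w.headAtStart)]) ++ w.marked
  | _, _, .bwd (y := y) _ w => (if w.isNil then [] else [(y, false)]) ++ w.marked
  | _, _, .bi (y := y) _ w => (if w.isNil then [] else [(y, w.headAtStart)]) ++ w.marked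

/-- A walk is a path if its vertices are pairwise distinct. -/
def IsPath {x y : V} (w : Walk G x y) : Prop := w.support.Nodup

/-- A walk is blocked by `S` if it contains a non-collider belonging to `S`, or a
collider such that neither the collider nor any of its descendants belongs to `S`. -/
def Blocked {x y : V} (w : Walk G x y) (S : Set V) : Prop :=
  ∃ p ∈ w.marked,
    (p.2 = false ∧ p.1 ∈ S) ∨
    (p.2 = true ∧ p.1 ∉ S ∧ ∀ d, G.Anc p.1 d → d ∉ S)

end Walk

/-- `x` and `y` are m-separated by `S` in `G`: every path between `x` and `y`
is blocked by `S`.  (In a DAG this is d-separation.) -/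
def MSep (G : DMG V) (x y : V) (S : Set V) : Prop :=
  ∀ w : Walk G x y, w.IsPath → w.Blocked S

/-- Vertex sets `A` and `B` are m-separated by `S`. -/
def MSepSets (G : DMG V) (A B S : Set V) : Prop :=
  ∀ x ∈ A, ∀ y ∈ B, G.MSep x y S

/-- The induced subgraph of `G` on a set `A` of vertices. -/
def induce (G : DMG V) (A : Set V) : DMG A where
  dir x y := G.dir x.1 y.1
  bidir x y := G.bidir x.1 y.1
  bidir_symm := fun _ _ h => G.bidir_symm _ _ h
  dir_ne := fun _ _ h he => G.dir_ne _ _ h (congrArg Subtype.val he)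
  bidir_ne := fun _ _ h he => G.bidir_ne _ _ h (congrArg Subtype.val he)

end DMG

open DMG in
/-- The ADMG over `{X₁, …, X₅}` (as `Fin 5`) with directed edges `X₁ → X₃`,
`X₃ → X₄` and the bidirected edge `X₂ ↔ X₅`. -/
def G12 : DMG (Fin 5) where
  dir x y := (x = 0 ∧ y = 2) ∨ (x = 2 ∧ y = 3)
  bidir x y := (x = 1 ∧ y = 4) ∨ (x = 4 ∧ y = 1)
  bidir_symm := by rintro x y (⟨hx, hy⟩ | ⟨hx, hy⟩) <;> subst hx <;> subst hy <;> simp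
  dir_ne := by rintro x y (⟨hx, hy⟩ | ⟨hx, hy⟩) <;> subst hx <;> subst hy <;> decide
  bidir_ne := by rintro x y (⟨hx, hy⟩ | ⟨hx, hy⟩) <;> subst hx <;> subst hy <;> decide

/-- The partition `C₁ = {X₁, X₂}`, `C₂ = {X₃}`, `C₃ = {X₄, X₅}`, as a map sending
each vertex to the index of its cluster. -/
def π12 : Fin 5 → Fin 3 := ![0, 0, 1, 2, 2]

lemma g12_anc_sub : ∀ x y : Fin 5, G12.Anc x y →
    ((x = 0 ∧ y = 2) ∨ (x = 2 ∧ y = 3) ∨ (x = 0 ∧ y = 3)) := by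
  intro x y h
  induction h with
  | single h => rcases h with ⟨hx, hy⟩ | ⟨hx, hy⟩ <;> subst hx <;> subst hy <;> tauto
  | tail _ h ih =>
    rcases h with ⟨hx, hy⟩ | ⟨hx, hy⟩ <;> subst hx <;> subst hy <;>
      rcases ih with ⟨h1, h2⟩ | ⟨h1, h2⟩ | ⟨h1, h2⟩ <;> simp_all

lemma cg_dir_lt : ∀ i j : Fin 3, (G12.clusterGraph π12).dir i j → i < j := by
  rintro i j ⟨hne, x, y, hx, hy, hd⟩
  rcases hd with ⟨h1, h2⟩ | ⟨h1, h2⟩ <;> subst h1 <;> subst h2 <;>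
    subst hx <;> subst hy <;> decide

lemma cg_anc_lt : ∀ i j : Fin 3, (G12.clusterGraph π12).Anc i j → i < j := by
  intro i j h
  induction h with
  | single h => exact cg_dir_lt _ _ h
  | tail _ h ih => exact lt_trans ih (cg_dir_lt _ _ h)

open DMG in
/-- the graph `G12` is ancestral, the partition `π12` is admissible,
and the induced cluster graph contains the bidirected edge `C₁ ↔ C₃` with `C₁` an
ancestor of `C₃` — an almost directed cycle, so the cluster graph is not ancestral. -/
theorem stmt12 :
    G12.Ancestral ∧
    (G12.clusterGraph π12).Acyclic ∧
    (G12.clusterGraph π12).bidir 0 2 ∧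
    (G12.clusterGraph π12).Anc 0 2 ∧
    ¬ (G12.clusterGraph π12).Ancestral := by
  have hbi : (G12.clusterGraph π12).bidir 0 2 :=
    ⟨by decide, 1, 4, by decide, by decide, Or.inl ⟨rfl, rfl⟩⟩
  have hanc : (G12.clusterGraph π12).Anc 0 2 := by
    refine Relation.TransGen.tail (Relation.TransGen.single (b := 1) ?_) ?_
    · exact ⟨by decide, 0, 2, by decide, by decide, Or.inl ⟨rfl, rfl⟩⟩
    · exact ⟨by decide, 2, 3, by decide, by decide, Or.inr ⟨rfl, rfl⟩⟩
  refine ⟨⟨?_, ?_⟩, ?_, hbi, hanc, ?_⟩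
  · intro x h
    rcases g12_anc_sub x x h with ⟨h1, h2⟩ | ⟨h1, h2⟩ | ⟨h1, h2⟩ <;> simp_all
  · rintro x y (⟨hx, hy⟩ | ⟨hx, hy⟩) h <;> subst hx <;> subst hy <;>
      rcases g12_anc_sub _ _ h with ⟨h1, h2⟩ | ⟨h1, h2⟩ | ⟨h1, h2⟩ <;> simp_all
  · intro i h
    exact lt_irrefl i (cg_anc_lt i i h)
  · rintro ⟨-, h⟩
    exact h 0 2 hbi hanc
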